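/- Let r ∈ K(x,y) be a rational function of the form r = Σ_{i=1}^{m} Σ_{k=1}^{d_i} M_{ik}(1/p_i(λ_i x + μ_i y)^k) as in the context. Let u ∈ K[x] be the common denominator of the M_{ik} and write each M_{ik} = (1/u) M̃_{ik} with M̃_{ik} ∈ K[x, y, S_{λ_i,μ_i}]. For each pair (i,k) define α_{ik} = max{−1, total degree of M̃_{ik} in (x,y)} and β_{ik} = max{−1, deg_y(M̃_{ik})}, and let ρ_0 = Σ_{i=1}^{m} Σ_{k=1}^{d_i} μ_i(β_{ik} + 1). Then for every pair (ρ,τ) of nonnegative integers with ρ ≥ ρ_0 and τ > deg_x(u) − 1 + (Σ_{i=1}^{m} Σ_{k=1}^{d_i} μ_i(α_{ik} − β_{ik}/2)(β_{ik} + 1))/(ρ + 1 − ρ_0), there exists a telescoper for r of order at most ρ and degree at most τ. -/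

import Mathlib

open Polynomial BigOperators

noncomputable section

/-- The shift automorphism `X ↦ X + 1` of a polynomial ring. -/
def shiftPoly (A : Type*) [CommRing A] : Polynomial A ≃ₐ[A] Polynomial A :=
  AlgEquiv.ofAlgHom (aeval (X + 1)) (aeval (X - 1))
    (by apply algHom_ext; simp) (by apply algHom_ext; simp)

variable (K : Type*) [Field K] [CharZero K]

/-- `K[x,y]` modelled as `K[x][y]`: the inner variable is `x`, the outer one is `y`. -/
abbrev Rxy := Polynomial (Polynomial K)

/-- The rational function field `K(x,y)`, as the fraction field of `K[x][y]`. -/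
abbrev Fxy := FractionRing (Rxy K)

/-- The shift `x ↦ x + 1` on `K[x]`. -/
def σxK : RingAut (Polynomial K) := (shiftPoly K).toRingEquiv

/-- The shift `x ↦ x + 1` on `K[x,y]`. -/
def σxR : RingAut (Rxy K) := mapEquiv (shiftPoly K).toRingEquiv

/-- The shift `y ↦ y + 1` on `K[x,y]`. -/
def σyR : RingAut (Rxy K) := (shiftPoly (Polynomial K)).toRingEquiv

/-- The shift `σ_x` on `K(x,y)`. -/
def σxF : RingAut (Fxy K) := IsFractionRing.ringEquivOfRingEquiv (σxR K)

/-- The shift `σ_y` on `K(x,y)`. -/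
def σyF : RingAut (Fxy K) := IsFractionRing.ringEquivOfRingEquiv (σyR K)

/-- The canonical map `K[x,y] → K(x,y)`. -/
def ι₀ : Rxy K →+* Fxy K := algebraMap (Rxy K) (Fxy K)

/-- The canonical map `K[x] → K(x,y)`. -/
def ιx₀ : Polynomial K →+* Fxy K := (ι₀ K).comp (Polynomial.C : Polynomial K →+* Rxy K)

/-- The canonical map `K → K(x,y)`. -/
def ιK : K →+* Fxy K := (ιx₀ K).comp (Polynomial.C : K →+* Polynomial K)

/-- The element `x` of `K(x,y)`. -/
def xF : Fxy K := ιx₀ K X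

/-- The element `y` of `K(x,y)`. -/
def yF : Fxy K := ι₀ K X

/-- A rational function `f ∈ K(x,y)` is `σ_y`-summable if `f = σ_y(g) - g`
for some `g ∈ K(x,y)`. -/
def IsSummableY (f : Fxy K) : Prop := ∃ g : Fxy K, f = σyF K g - g

/-- The Laurent operator ring `A = K(x,y)[S_x,S_y,S_x⁻¹,S_y⁻¹]`, an operator being
recorded by its (finitely supported) family of coefficients `a_{ij}` in
`L = Σ a_{ij} S_x^i S_y^j`. -/
abbrev OpA := (ℤ × ℤ) →₀ Fxy K

/-- The subring `A_{λ,μ} = K(x,y)[S_{λ,μ}, S_{λ,μ}⁻¹]`, an operator being recorded by its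
(finitely supported) family of coefficients `a_i` in `M = Σ a_i S_{λ,μ}^i`. -/
abbrev OpB := ℤ →₀ Fxy K

/-- The automorphism `σ_x^i σ_y^j` of `K(x,y)` attached to the monomial `S_x^i S_y^j`. -/
def σv (v : ℤ × ℤ) : RingAut (Fxy K) := σxF K ^ v.1 * σyF K ^ v.2

/-- Multiplication in `A`, determined by the commutation rule `S_x^i S_y^j f
= σ_x^i σ_y^j (f) S_x^i S_y^j`. -/
def mulA (L M : OpA K) : OpA K :=
  L.sum fun p a => M.sum fun q b => Finsupp.single (p + q) (a * σv K p b)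

/-- The application of an operator `L = Σ a_{ij} S_x^i S_y^j ∈ A` to a rational function. -/
def applyA (L : OpA K) (f : Fxy K) : Fxy K := L.sum fun p a => a * σv K p f

/-- The operator `S_y - 1 ∈ A`. -/
def SyOne : OpA K :=
  Finsupp.single ((0 : ℤ), (1 : ℤ)) (1 : Fxy K) - Finsupp.single ((0 : ℤ), (0 : ℤ)) (1 : Fxy K)

section TypeLamMu

/- `α`, `β` are the Bézout cofactors for the integer-linear type `(λ, μ)`,
so that `S_{λ,μ} = S_x^α S_y^β`. -/
variable (α β : ℤ)

/-- The automorphism `σ_{λ,μ} = σ_x^α σ_y^β` of `K(x,y)` attached to `S_{λ,μ} = S_x^α S_y^β`. -/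
def τF : RingAut (Fxy K) := σxF K ^ α * σyF K ^ β

/-- Multiplication in `A_{λ,μ}`. -/
def mulB (L M : OpB K) : OpB K :=
  L.sum fun i a => M.sum fun j b => Finsupp.single (i + j) (a * (τF K α β ^ i) b)

/-- The application of an operator `M = Σ a_i S_{λ,μ}^i ∈ A_{λ,μ}` to a rational function. -/
def applyB (M : OpB K) (f : Fxy K) : Fxy K := M.sum fun i a => a * (τF K α β ^ i) f

/-- The inclusion `A_{λ,μ} ⊆ A`, sending `S_{λ,μ}^k` to `S_x^{kα} S_y^{kβ}`. -/
def ιB (M : OpB K) : OpA K := Finsupp.mapDomain (fun k : ℤ => (k * α, k * β)) M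

/-- The left `K(x,y)`-linear map `φ_{λ,μ} : A → A_{λ,μ}`,
sending `Σ a_{ij} S_x^i S_y^j` to `Σ a_{ij} S_{λ,μ}^{iλ+jμ}`. -/
def φB (lam μ : ℤ) (L : OpA K) : OpB K :=
  Finsupp.mapDomain (fun p : ℤ × ℤ => p.1 * lam + p.2 * μ) L

/-- The left scalar multiplication `L ⊙ M = φ_{λ,μ}(L M)` of `L ∈ A` on `M ∈ A_{λ,μ}`. -/
def odot (lam μ : ℤ) (L : OpA K) (M : OpB K) : OpB K :=
  φB K lam μ (mulA K L (ιB K α β M))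

end TypeLamMu

/-- The lowest order `lord(M)` of a (nonzero) operator `M ∈ A_{λ,μ}`. -/
def lord (M : OpB K) : ℤ := WithTop.untopD 0 (M.support.min)

/-- The highest order `hord(M)` of a (nonzero) operator `M ∈ A_{λ,μ}`. -/
def hord (M : OpB K) : ℤ := WithBot.unbotD 0 (M.support.max)

/-- The inclusion `K(x,y)[S_y, S_y⁻¹] ⊆ A`. -/
def ιy (L : ℤ →₀ Fxy K) : OpA K := Finsupp.mapDomain (fun j : ℤ => ((0 : ℤ), j)) L

/-- The inclusion `K[x][S_x] ⊆ A`, for operators with polynomial coefficients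
supported on nonnegative powers of `S_x`. -/
def ιxOp (L : ℕ →₀ Polynomial K) : OpA K :=
  L.sum fun ℓ c => Finsupp.single ((ℓ : ℤ), (0 : ℤ)) (ιx₀ K c)

/-- A nonzero operator `L = Σ c_ℓ S_x^ℓ ∈ K[x][S_x]` is a telescoper for `f ∈ K(x,y)`
if `L(f)` is `σ_y`-summable. -/
def IsTelescoper (L : ℕ →₀ Polynomial K) (f : Fxy K) : Prop :=
  L ≠ 0 ∧ IsSummableY K (applyA K (ιxOp K L) f)

/-- The degree in `x` of a polynomial in `K[x,y] = K[x][y]`. -/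
def degX (r : Rxy K) : ℕ := r.support.sup fun n => (r.coeff n).natDegree

/-- The total degree in `x, y` of a polynomial in `K[x,y] = K[x][y]`. -/
def degXY (r : Rxy K) : ℕ := r.support.sup fun n => n + (r.coeff n).natDegree

end

noncomputable section

variable (K : Type*) [Field K] [CharZero K]

/-- The element `λx + μy` of `K(x,y)`. -/
def wF (lam μ : ℤ) : Fxy K := (lam : Fxy K) * xF K + (μ : Fxy K) * yF K

/-- The rational function `p(λx + μy) ∈ K(x,y)`, for a univariate polynomial `p ∈ K[z]`. -/
def peF (lam μ : ℤ) (p : Polynomial K) : Fxy K := Polynomial.eval₂ (ιK K) (wF K lam μ) p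

/-- The element `λx + μy` of `K[x,y]`. -/
def wR (lam μ : ℤ) : Rxy K :=
  (lam : Rxy K) * Polynomial.C Polynomial.X + (μ : Rxy K) * Polynomial.X

/-- The polynomial `p(λx + μy) ∈ K[x,y]`, for a univariate polynomial `p ∈ K[z]`. -/
def peR (lam μ : ℤ) (p : Polynomial K) : Rxy K :=
  Polynomial.eval₂ (algebraMap K (Rxy K)) (wR K lam μ) p

end

noncomputable section

variable (K : Type*) [Field K] [CharZero K]

/-- A nonzero polynomial `b ∈ K[x,y]` is `σ_y`-free if `gcd(b, σ_y^ℓ(b)) ∈ K[x]` for all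
nonzero integers `ℓ`, i.e. every common divisor of `b` and `σ_y^ℓ(b)` has `y`-degree `0`. -/
def SigmaYFree (b : Rxy K) : Prop :=
  ∀ ℓ : ℤ, ℓ ≠ 0 → ∀ d : Rxy K, d ∣ b → d ∣ (σyR K ^ ℓ) b → d.natDegree = 0

/-- A polynomial in `K[x,y] = K[x][y]` is `y`-primitive if the gcd over `K[x]` of its
coefficients with respect to `y` equals `1`. -/
def YPrimitive (b : Rxy K) : Prop :=
  ∀ d : Polynomial K, (∀ n : ℕ, d ∣ b.coeff n) → IsUnit d

/-- A rational function is proper with respect to `y`: the degree in `y` of its numerator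
is less than that of its denominator. -/
def ProperY (f : Fxy K) : Prop :=
  ∃ a b : Rxy K, b ≠ 0 ∧ f = ι₀ K a / ι₀ K b ∧ a.degree < b.degree

/-- A rational function has a `σ_y`-free denominator (in lowest terms). -/
def SigmaYFreeDenom (f : Fxy K) : Prop :=
  ∃ a b : Rxy K, b ≠ 0 ∧ IsRelPrime a b ∧ f = ι₀ K a / ι₀ K b ∧ SigmaYFree K b

/-- `r` is a `σ_y`-remainder (of itself): proper with respect to `y`, with `σ_y`-free
denominator. -/
def IsSigmaYRemainder (r : Fxy K) : Prop := ProperY K r ∧ SigmaYFreeDenom K r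

/-- `r` is a `σ_y`-remainder of `f`: `f − r` is `σ_y`-summable, `r` is proper with
respect to `y`, and the denominator of `r` is `σ_y`-free. -/
def IsSigmaYRemainderOf (r f : Fxy K) : Prop :=
  IsSummableY K (f - r) ∧ IsSigmaYRemainder K r

end

noncomputable section

variable (K : Type*) [Field K] [CharZero K]

/-- Operators in `K[x,y][S_{λ,μ}]` (polynomial coefficients), recorded by their
coefficient families. -/
abbrev OpR := ℤ →₀ Rxy K

/-- The inclusion `K[x,y][S_{λ,μ}] ⊆ K(x,y)[S_{λ,μ}, S_{λ,μ}⁻¹]`. -/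
def toOpB (N : OpR K) : OpB K := Finsupp.mapRange (ι₀ K) (map_zero _) N

/-- The degree in `x` of an operator with coefficients in `K[x,y]`. -/
def degXOp (N : OpR K) : ℕ := N.support.sup fun l => degX K (N l)

/-- The degree in `y` of an operator with coefficients in `K[x,y]`. -/
def degYOp (N : OpR K) : ℕ := N.support.sup fun l => (N l).natDegree

/-- The total degree in `x, y` of an operator with coefficients in `K[x,y]`. -/
def degXYOp (N : OpR K) : ℕ := N.support.sup fun l => degXY K (N l)

end

/-! The telescoper is sought in the form `L = Σ_{ℓ ≤ ρ} σ_x^ℓ(u) e_ℓ S_x^ℓ` with `e_ℓ ∈ K[x]`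
of degree at most `D = τ - deg u`. The factor `σ_x^ℓ(u)` clears the denominator of `σ_x^ℓ(M_{ik})`,
and modulo `σ_y`-summable functions a term `N / p_i(λ_i x + μ_i y + c)^k` may be moved by a
power of `σ_y` until `0 ≤ c < μ_i`. Hence
`L(r) ≡ Σ_{i,k} Σ_{0 ≤ s < μ_i} N_{iks} / p_i(λ_i x + μ_i y + s)^k`, where the polynomials
`N_{iks}` depend linearly on the `e_ℓ` and have total degree `< D + α_{ik} + 1` and `y`-degree
`≤ β_{ik}`. Asking all their coefficients to vanish is a homogeneous linear system with
`Σ_{i,k} μ_i Σ_{b ≤ β_{ik}} (D + α_{ik} + 1 - b)` equations in `(ρ + 1)(D + 1)` unknowns, and the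
hypothesis on `(ρ, τ)` says precisely that there are fewer equations than unknowns. -/

namespace RingAut

variable {R S : Type*} [Semiring R] [Semiring S]

theorem zpow_apply_eq_of_succ (f : RingAut R) (F : ℤ → R → R) (h0 : ∀ x, F 0 x = x)
    (hsucc : ∀ t x, F (t + 1) x = F t (f x)) (t : ℤ) (x : R) : (f ^ t) x = F t x := by
  induction t using Int.induction_on generalizing x with
  | zero => simp [h0]
  | succ t ih => rw [zpow_add_one, mul_apply, ih, hsucc]
  | pred t ih =>
    have h := hsucc (-t - 1) (f.symm x)
    rw [sub_add_cancel, RingEquiv.apply_symm_apply] at h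
    rw [zpow_sub_one, mul_apply, ih, ← h]
    rfl

theorem zpow_apply_eq_add_zsmul {A : Type*} [AddCommGroup A] (f : RingAut R) (P : A → R)
    (δ : A) (h : ∀ c, f (P c) = P (c + δ)) (t : ℤ) (c : A) : (f ^ t) (P c) = P (c + t • δ) := by
  induction t using Int.induction_on generalizing c with
  | zero => simp
  | succ t ih => rw [zpow_add_one, mul_apply, h, ih, add_zsmul, one_zsmul, add_assoc, add_comm δ]
  | pred t ih =>
    have h' : f.symm (P c) = P (c - δ) := by
      rw [RingEquiv.symm_apply_eq, h, sub_add_cancel]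
    rw [zpow_sub_one, mul_apply, inv_apply, h', ih, sub_zsmul, one_zsmul]
    congr 1; abel

theorem zpow_apply_map (ι : R →+* S) (F : RingAut S) (G : RingAut R)
    (h : ∀ z, F (ι z) = ι (G z)) (t : ℤ) (z : R) : (F ^ t) (ι z) = ι ((G ^ t) z) := by
  induction t using Int.induction_on generalizing z with
  | zero => simp
  | succ t ih => rw [zpow_add_one, zpow_add_one, mul_apply, mul_apply, h, ih]
  | pred t ih =>
    have h' : F.symm (ι z) = ι (G.symm z) := by
      rw [RingEquiv.symm_apply_eq, h, RingEquiv.apply_symm_apply]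
    rw [zpow_sub_one, zpow_sub_one, mul_apply, mul_apply, inv_apply, inv_apply, h', ih]

end RingAut

section Shifts

variable {K : Type*} [Field K]

theorem shiftPoly_apply {A : Type*} [CommRing A] (q : A[X]) : shiftPoly A q = taylor 1 q := by
  rw [taylor_apply, C_1, comp_eq_aeval]; rfl

theorem σxK_zpow_apply (s : ℤ) (q : K[X]) : (σxK K ^ s) q = taylor (s : K) q := by
  refine RingAut.zpow_apply_eq_of_succ _ (fun t q => taylor (t : K) q) (fun q => by simp)
    (fun t q => ?_) s q
  change _ = taylor _ (shiftPoly K q)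
  rw [shiftPoly_apply, taylor_taylor]; push_cast; rfl

theorem σyR_zpow_apply (t : ℤ) (n : Rxy K) : (σyR K ^ t) n = taylor (t : K[X]) n := by
  refine RingAut.zpow_apply_eq_of_succ _ (fun t n => taylor (t : K[X]) n) (fun n => by simp)
    (fun t n => ?_) t n
  change _ = taylor _ (shiftPoly K[X] n)
  rw [shiftPoly_apply, taylor_taylor]; push_cast; rfl

theorem σxR_zpow_apply (s : ℤ) (n : Rxy K) :
    (σxR K ^ s) n = n.map (taylorAlgHom (s : K) : K[X] →+* K[X]) := by
  refine RingAut.zpow_apply_eq_of_succ _ (fun t n => n.map (taylorAlgHom (t : K) : K[X] →+* K[X]))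
    (fun n => ?_) (fun t n => ?_) s n
  · convert Polynomial.map_id
    exact RingHom.ext fun q => by simp
  · change _ = (n.map (shiftPoly K : K[X] →+* K[X])).map _
    rw [map_map]
    congr 1
    exact RingHom.ext fun q => by simp [shiftPoly_apply, taylor_taylor]

theorem σxF_zpow_ι₀ (s : ℤ) (z : Rxy K) : (σxF K ^ s) (ι₀ K z) = ι₀ K ((σxR K ^ s) z) :=
  RingAut.zpow_apply_map _ _ _ (IsFractionRing.ringEquivOfRingEquiv_algebraMap _) s z

theorem σyF_zpow_ι₀ (t : ℤ) (z : Rxy K) : (σyF K ^ t) (ι₀ K z) = ι₀ K ((σyR K ^ t) z) :=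
  RingAut.zpow_apply_map _ _ _ (IsFractionRing.ringEquivOfRingEquiv_algebraMap _) t z

theorem σxF_zpow_ιx₀ (s : ℤ) (q : K[X]) : (σxF K ^ s) (ιx₀ K q) = ιx₀ K ((σxK K ^ s) q) := by
  simp [ιx₀, σxF_zpow_ι₀, σxR_zpow_apply, σxK_zpow_apply]

theorem σyF_zpow_ιx₀ (t : ℤ) (q : K[X]) : (σyF K ^ t) (ιx₀ K q) = ιx₀ K q := by
  simp [ιx₀, σyF_zpow_ι₀, σyR_zpow_apply]

theorem σxF_zpow_ιK (s : ℤ) (a : K) : (σxF K ^ s) (ιK K a) = ιK K a := by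
  simp [ιK, σxF_zpow_ιx₀, σxK_zpow_apply]

theorem σyF_zpow_ιK (t : ℤ) (a : K) : (σyF K ^ t) (ιK K a) = ιK K a := by
  simp [ιK, σyF_zpow_ιx₀]

theorem σxF_zpow_wF (lam μ s : ℤ) : (σxF K ^ s) (wF K lam μ) = wF K lam μ + (s * lam : ℤ) := by
  simp [wF, xF, yF, σxF_zpow_ιx₀, σxF_zpow_ι₀, σxK_zpow_apply, σxR_zpow_apply]
  ring

theorem σyF_zpow_wF (lam μ t : ℤ) : (σyF K ^ t) (wF K lam μ) = wF K lam μ + (t * μ : ℤ) := by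
  simp [wF, xF, yF, σyF_zpow_ιx₀, σyF_zpow_ι₀, σyR_zpow_apply]
  ring

noncomputable def peShift (lam μ : ℤ) (p : K[X]) (c : ℤ) : Fxy K :=
  eval₂ (ιK K) (wF K lam μ + (c : Fxy K)) p

theorem peF_eq_peShift_zero (lam μ : ℤ) (p : K[X]) : peF K lam μ p = peShift lam μ p 0 := by
  simp [peF, peShift]

theorem apply_eval₂_ιK (g : RingAut (Fxy K)) (hg : ∀ a, g (ιK K a) = ιK K a) (w : Fxy K)
    (p : K[X]) : g (eval₂ (ιK K) w p) = eval₂ (ιK K) (g w) p := by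
  rw [← RingEquiv.coe_toRingHom, hom_eval₂]
  congr 1
  exact RingHom.ext hg

theorem σxF_zpow_peShift (lam μ : ℤ) (p : K[X]) (s c : ℤ) :
    (σxF K ^ s) (peShift lam μ p c) = peShift lam μ p (c + s * lam) := by
  rw [peShift, apply_eval₂_ιK _ (σxF_zpow_ιK s), map_add, σxF_zpow_wF, map_intCast, peShift]
  push_cast; ring_nf

theorem σyF_zpow_peShift (lam μ : ℤ) (p : K[X]) (t c : ℤ) :
    (σyF K ^ t) (peShift lam μ p c) = peShift lam μ p (c + t * μ) := by
  rw [peShift, apply_eval₂_ιK _ (σyF_zpow_ιK t), map_add, σyF_zpow_wF, map_intCast, peShift]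
  push_cast; ring_nf

theorem τF_zpow_peShift {α β lam μ : ℤ} (hbez : α * lam + β * μ = 1) (p : K[X]) (l c : ℤ) :
    (τF K α β ^ l) (peShift lam μ p c) = peShift lam μ p (c + l) := by
  have step : ∀ c, τF K α β (peShift lam μ p c) = peShift lam μ p (c + 1) := fun c => by
    rw [τF, RingAut.mul_apply, σyF_zpow_peShift, σxF_zpow_peShift, ← hbez]
    ring_nf
  simpa using RingAut.zpow_apply_eq_add_zsmul _ (peShift lam μ p) 1 step l c

end Shifts

section Summable

variable {K : Type*} [Field K]

def summableY : AddSubgroup (Fxy K) where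
  carrier := {f | IsSummableY K f}
  zero_mem' := ⟨0, by simp⟩
  add_mem' := by
    rintro _ _ ⟨g, rfl⟩ ⟨h, rfl⟩
    exact ⟨g + h, by rw [map_add]; ring⟩
  neg_mem' := by
    rintro _ ⟨g, rfl⟩
    exact ⟨-g, by rw [map_neg]; ring⟩

theorem σyF_zpow_sub_mem_summableY (t : ℤ) (f : Fxy K) : (σyF K ^ t) f - f ∈ summableY := by
  induction t using Int.induction_on generalizing f with
  | zero => simp
  | succ t ih =>
    rw [zpow_add_one, RingAut.mul_apply, ← sub_add_sub_cancel _ (σyF K f)]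
    exact add_mem (ih _) ⟨f, rfl⟩
  | pred t ih =>
    rw [zpow_sub_one, RingAut.mul_apply, ← sub_sub_sub_cancel_right _ _ ((σyF K)⁻¹ f)]
    refine sub_mem (ih _) ⟨(σyF K)⁻¹ f, ?_⟩
    rw [RingAut.inv_apply, RingEquiv.apply_symm_apply]

theorem ιx₀_mul_mem_summableY (q : K[X]) {f : Fxy K} (hf : f ∈ summableY) :
    ιx₀ K q * f ∈ summableY := by
  obtain ⟨g, rfl⟩ := hf
  refine ⟨ιx₀ K q * g, ?_⟩
  rw [map_mul, show σyF K (ιx₀ K q) = ιx₀ K q by simpa using σyF_zpow_ιx₀ 1 q]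
  ring

theorem sum_sub_sum_σyF_zpow_mem_summableY {ι : Type*} (S : Finset ι) (f : ι → Fxy K)
    (t : ι → ℤ) : ∑ i ∈ S, f i - ∑ i ∈ S, (σyF K ^ t i) (f i) ∈ summableY := by
  rw [← neg_sub, ← Finset.sum_sub_distrib]
  exact neg_mem (sum_mem fun i _ => σyF_zpow_sub_mem_summableY _ _)

end Summable

section DegreeBounds

theorem Polynomial.natDegree_coeff_taylor_C_le {R : Type*} [CommSemiring R] {n : R[X][X]}
    (c : R) (b N : ℕ)
    (h : ∀ i, b ≤ i → (n.coeff i).natDegree ≤ N) : ((taylor (C c) n).coeff b).natDegree ≤ N := by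
  rw [taylor_coeff, eval_eq_sum_range]
  refine natDegree_sum_le_of_forall_le _ _ fun i _ => ?_
  rw [hasseDeriv_coeff, ← C_pow, ← map_natCast C, mul_comm, ← mul_assoc, ← Polynomial.C_mul]
  exact (natDegree_C_mul_le _ _).trans (h _ (Nat.le_add_left b i))

variable {K : Type*} [Field K]

def DegLT (n : Rxy K) (A B : ℕ) : Prop :=
  ∀ b, n.coeff b ≠ 0 → b < B ∧ (n.coeff b).natDegree + b < A

namespace DegLT

variable {n : Rxy K} {A B : ℕ}

theorem sum {ι : Type*} (s : Finset ι) {f : ι → Rxy K} (h : ∀ i ∈ s, DegLT (f i) A B) :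
    DegLT (∑ i ∈ s, f i) A B := by
  intro b hb
  rw [finsetSum_coeff] at hb ⊢
  obtain ⟨i, hi, hne⟩ := Finset.exists_ne_zero_of_sum_ne_zero hb
  have hbA := (h i hi b hne).2
  refine ⟨(h i hi b hne).1, ?_⟩
  suffices (∑ i ∈ s, (f i).coeff b).natDegree ≤ A - 1 - b by omega
  refine natDegree_sum_le_of_forall_le _ _ fun j hj => ?_
  by_cases hj0 : (f j).coeff b = 0
  · simp [hj0]
  · have := (h j hj b hj0).2; omega

theorem C_mul {q : K[X]} {D : ℕ} (hq : q.natDegree ≤ D) (h : DegLT n A B) :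
    DegLT (C q * n) (D + A) B := by
  intro b hb
  rw [coeff_C_mul] at hb ⊢
  have hnb : n.coeff b ≠ 0 := right_ne_zero_of_mul hb
  have := natDegree_mul_le (p := q) (q := n.coeff b)
  have := h b hnb
  omega

theorem map_taylor (c : K) (h : DegLT n A B) :
    DegLT (n.map (taylorAlgHom c : K[X] →+* K[X])) A B := by
  intro b hb
  simp only [coeff_map, RingHom.coe_coe, taylorAlgHom_apply, ne_eq, taylor_eq_zero] at hb ⊢
  rw [natDegree_taylor]
  exact h b hb

theorem taylor_C (c : K) (h : DegLT n A B) : DegLT (taylor (C c) n) A B := by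
  intro b hb
  have hbn : b ≤ n.natDegree := natDegree_taylor n (C c) ▸ le_natDegree_of_ne_zero hb
  have hn : n ≠ 0 := by rintro rfl; simp at hb
  have hlead := h n.natDegree (leadingCoeff_ne_zero.mpr hn)
  suffices ((taylor (C c) n).coeff b).natDegree ≤ A - 1 - b by omega
  refine natDegree_coeff_taylor_C_le c b _ fun i hi => ?_
  by_cases hi0 : n.coeff i = 0
  · simp [hi0]
  · have := (h i hi0).2; omega

theorem σxR_zpow (s : ℤ) (h : DegLT n A B) : DegLT ((σxR K ^ s) n) A B := by
  rw [σxR_zpow_apply]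
  exact h.map_taylor _

theorem σyR_zpow (t : ℤ) (h : DegLT n A B) : DegLT ((σyR K ^ t) n) A B := by
  rw [σyR_zpow_apply, ← map_intCast (C : K →+* K[X])]
  exact h.taylor_C _

theorem eq_zero (h : DegLT n A B) (hc : ∀ b < B, ∀ a < A - b, (n.coeff b).coeff a = 0) :
    n = 0 := by
  by_contra hn
  obtain ⟨b, hb⟩ : ∃ b, n.coeff b ≠ 0 := by simpa [Polynomial.ext_iff] using hn
  have := h b hb
  exact leadingCoeff_ne_zero.mpr hb (hc b this.1 _ (by omega))

end DegLT

theorem degLT_degXYOp_degYOp (N : OpR K) (l : ℤ) :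
    DegLT (N l) (degXYOp K N + 1) (degYOp K N + 1) := by
  intro b hb
  have hl : l ∈ N.support := Finsupp.mem_support_iff.mpr (by rintro h; simp [h] at hb)
  have hy : (N l).natDegree ≤ degYOp K N := Finset.le_sup (f := fun l => (N l).natDegree) hl
  have hxy : degXY K (N l) ≤ degXYOp K N := Finset.le_sup (f := fun l => degXY K (N l)) hl
  have hb' : b + ((N l).coeff b).natDegree ≤ degXY K (N l) :=
    Finset.le_sup (f := fun b => b + ((N l).coeff b).natDegree) (mem_support_iff.mpr hb)
  have := le_natDegree_of_ne_zero hb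
  omega

theorem degYOp_le_degXYOp (N : OpR K) : degYOp K N ≤ degXYOp K N := by
  refine Finset.sup_mono_fun fun l hl => ?_
  have hNl : N l ≠ 0 := Finsupp.mem_support_iff.mp hl
  exact ((Nat.le_add_right _ _).trans (Finset.le_sup (f := fun b => b + ((N l).coeff b).natDegree)
    (mem_support_iff.mpr (leadingCoeff_ne_zero.mpr hNl))))

theorem degLT_of_eq_ite {N : OpR K} [Decidable (N = 0)] {a b : ℤ}
    (ha : a = if N = 0 then -1 else (degXYOp K N : ℤ))
    (hb : b = if N = 0 then -1 else (degYOp K N : ℤ)) :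
    -1 ≤ b ∧ b ≤ a ∧ ∀ l, DegLT (N l) (a + 1).toNat (b + 1).toNat := by
  split_ifs at ha hb with hN
  · subst ha hb hN
    exact ⟨le_rfl, le_rfl, fun l b hb => by simp at hb⟩
  · subst ha hb
    refine ⟨by omega, by exact_mod_cast degYOp_le_degXYOp N, fun l => ?_⟩
    simpa using degLT_degXYOp_degYOp N l

end DegreeBounds

section Reduction

variable {K : Type*} [Field K]

/-- The numerator over `p(λx + μy + s)` collected from `σ_x^ℓ(N)`, after each term over
`p(λx + μy + c)` has been moved by `σ_y^{-(c / μ)}` to `c % μ`. -/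
noncomputable def reducedNumerator (lam μ : ℤ) (N : OpR K) (ℓ : ℕ) (s : ℤ) : Rxy K :=
  ∑ l ∈ N.support with (l + ℓ * lam) % μ = s,
    (σyR K ^ (-((l + ℓ * lam) / μ))) ((σxR K ^ (ℓ : ℤ)) (N l))

theorem DegLT.reducedNumerator {N : OpR K} {A B : ℕ} (h : ∀ l, DegLT (N l) A B) (lam μ : ℤ)
    (ℓ : ℕ) (s : ℤ) : DegLT (reducedNumerator lam μ N ℓ s) A B :=
  DegLT.sum _ fun l _ => ((h l).σxR_zpow _).σyR_zpow _

theorem applyB_eq_sum (α β : ℤ) {M : OpB K} {N : OpR K} {u : K[X]}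
    (hM : ∀ l, M l = ι₀ K (N l) / ιx₀ K u) (f : Fxy K) :
    applyB K α β M f = ∑ l ∈ N.support, ι₀ K (N l) / ιx₀ K u * (τF K α β ^ l) f := by
  have hsub : M.support ⊆ N.support := fun l hl => by
    rw [Finsupp.mem_support_iff] at hl ⊢
    exact fun h => hl (by rw [hM, h, map_zero, zero_div])
  rw [applyB, Finsupp.sum_of_support_subset M hsub (fun l a => a * (τF K α β ^ l) f)
    (fun _ _ => zero_mul _)]
  simp_rw [hM]

theorem ιx₀_injective : Function.Injective (ιx₀ K) :=
  (IsFractionRing.injective (Rxy K) (Fxy K)).comp C_injective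

theorem shift_applyB_sub_sum_reducedNumerator_mem_summableY {α β lam μ : ℤ} (hμ : 0 < μ)
    (hbez : α * lam + β * μ = 1) (p : K[X]) (n : ℕ) {M : OpB K} {N : OpR K} {u : K[X]}
    (hu : u ≠ 0) (hM : ∀ l, M l = ι₀ K (N l) / ιx₀ K u) (ℓ : ℕ) :
    ιx₀ K ((σxK K ^ (ℓ : ℤ)) u) * (σxF K ^ (ℓ : ℤ)) (applyB K α β M (peF K lam μ p ^ n)⁻¹) -
      ∑ s ∈ Finset.Ico 0 μ, ι₀ K (reducedNumerator lam μ N ℓ s) * (peShift lam μ p s ^ n)⁻¹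
      ∈ summableY := by
  set Q : ℤ → Fxy K := fun c => (peShift lam μ p c ^ n)⁻¹
  set c : ℤ → ℤ := fun l => l + ℓ * lam
  set T : ℤ → Rxy K := fun l => (σxR K ^ (ℓ : ℤ)) (N l)
  have hu' : ιx₀ K ((σxK K ^ (ℓ : ℤ)) u) ≠ 0 :=
    (map_ne_zero_iff _ ιx₀_injective).mpr ((map_ne_zero_iff _ (RingEquiv.injective _)).mpr hu)
  have h1 : ιx₀ K ((σxK K ^ (ℓ : ℤ)) u) * (σxF K ^ (ℓ : ℤ)) (applyB K α β M (peF K lam μ p ^ n)⁻¹)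
      = ∑ l ∈ N.support, ι₀ K (T l) * Q (c l) := by
    rw [applyB_eq_sum α β hM, map_sum, Finset.mul_sum]
    refine Finset.sum_congr rfl fun l _ => ?_
    rw [peF_eq_peShift_zero, map_inv₀, map_pow, τF_zpow_peShift hbez, map_mul, map_div₀,
      σxF_zpow_ι₀, σxF_zpow_ιx₀, map_inv₀, map_pow, σxF_zpow_peShift, zero_add]
    simp only [Q, T, c]
    field_simp
  have h2 : ∀ l, (σyF K ^ (-(c l / μ))) (ι₀ K (T l) * Q (c l))
      = ι₀ K ((σyR K ^ (-(c l / μ))) (T l)) * Q (c l % μ) := fun l => by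
    simp only [Q]
    rw [map_mul, σyF_zpow_ι₀, map_inv₀, map_pow, σyF_zpow_peShift, Int.emod_def]
    ring_nf
  have h3 : ∑ l ∈ N.support, ι₀ K ((σyR K ^ (-(c l / μ))) (T l)) * Q (c l % μ)
      = ∑ s ∈ Finset.Ico 0 μ, ι₀ K (reducedNumerator lam μ N ℓ s) * Q s := by
    rw [← Finset.sum_fiberwise_of_maps_to (g := fun l => c l % μ) (t := Finset.Ico 0 μ)
      (fun l _ => Finset.mem_Ico.mpr ⟨Int.emod_nonneg _ hμ.ne', Int.emod_lt_of_pos _ hμ⟩)]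
    refine Finset.sum_congr rfl fun s _ => ?_
    rw [reducedNumerator, map_sum, Finset.sum_mul]
    exact Finset.sum_congr rfl fun l hl => by rw [(Finset.mem_filter.mp hl).2]
  rw [h1, ← h3, ← Finset.sum_congr rfl fun l _ => h2 l]
  exact sum_sub_sum_σyF_zpow_mem_summableY _ _ _

end Reduction

section Operators

variable {K : Type*} [Field K] {n : ℕ}

noncomputable def opOfFin (c : Fin n → K[X]) : ℕ →₀ K[X] :=
  Finsupp.embDomain Fin.valEmbedding (Finsupp.equivFunOnFinite.symm c)

theorem applyA_ιxOp (L : ℕ →₀ K[X]) (f : Fxy K) :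
    applyA K (ιxOp K L) f = L.sum fun ℓ q => ιx₀ K q * (σxF K ^ (ℓ : ℤ)) f := by
  rw [applyA, ιxOp, Finsupp.sum_sum_index (fun _ => zero_mul _) (fun _ _ _ => add_mul _ _ _)]
  refine Finsupp.sum_congr fun ℓ _ => ?_
  rw [Finsupp.sum_single_index (zero_mul _), σv, zpow_zero, mul_one]

theorem applyA_ιxOp_opOfFin (c : Fin n → K[X]) (f : Fxy K) :
    applyA K (ιxOp K (opOfFin c)) f = ∑ ℓ, ιx₀ K (c ℓ) * (σxF K ^ (ℓ : ℤ)) f := by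
  rw [applyA_ιxOp, opOfFin, Finsupp.sum_embDomain, Finsupp.sum_fintype _ _ (by simp)]
  rfl

theorem opOfFin_ne_zero {c : Fin n → K[X]} (hc : c ≠ 0) : opOfFin c ≠ 0 := by
  rw [opOfFin, ne_eq, Finsupp.embDomain_eq_zero, Equiv.symm_apply_eq]
  exact hc

theorem lt_of_mem_support_opOfFin {c : Fin n → K[X]} {ℓ : ℕ} (hℓ : ℓ ∈ (opOfFin c).support) :
    ℓ < n := by
  rw [opOfFin, Finsupp.support_embDomain, Finset.mem_map] at hℓ
  obtain ⟨ℓ', -, rfl⟩ := hℓ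
  exact ℓ'.isLt

theorem opOfFin_apply_val (c : Fin n → K[X]) (ℓ : Fin n) : opOfFin c ℓ = c ℓ :=
  Finsupp.embDomain_apply_self _ _ ℓ

theorem natDegree_opOfFin_le {c : Fin n → K[X]} {τ : ℕ} (hc : ∀ ℓ, (c ℓ).natDegree ≤ τ)
    (ℓ : ℕ) : (opOfFin c ℓ).natDegree ≤ τ := by
  by_cases hℓ : ℓ < n
  · rw [show ℓ = ((⟨ℓ, hℓ⟩ : Fin n) : ℕ) from rfl, opOfFin_apply_val]
    exact hc _
  · rw [opOfFin, Finsupp.embDomain_of_notMem_range _ _ _ (by simpa using hℓ), natDegree_zero]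
    exact Nat.zero_le τ

theorem sum_ιx₀_mul_sum_eq (e : Fin n → K[X]) (P : Fin n → ℤ → Rxy K) (S : Finset ℤ)
    (Q : ℤ → Fxy K) : ∑ ℓ, ιx₀ K (e ℓ) * ∑ s ∈ S, ι₀ K (P ℓ s) * Q s =
      ∑ s ∈ S, ι₀ K (∑ ℓ, C (e ℓ) * P ℓ s) * Q s := by
  simp only [Finset.mul_sum, map_sum, map_mul, Finset.sum_mul, mul_assoc]
  exact Finset.sum_comm

theorem isTelescoper_opOfFin {m : ℕ} {d : Fin m → ℕ} {lam μ α β : Fin m → ℤ}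
    (hμ : ∀ i, 0 < μ i) (hbez : ∀ i, α i * lam i + β i * μ i = 1) {p : Fin m → K[X]}
    {M : (i : Fin m) → Fin (d i) → OpB K} {u : K[X]} (hu : u ≠ 0)
    {Mt : (i : Fin m) → Fin (d i) → OpR K} (hMt : ∀ i k l, M i k l = ι₀ K (Mt i k l) / ιx₀ K u)
    {n : ℕ} {e : Fin n → K[X]} (he : e ≠ 0)
    (hN : ∀ i k, ∀ s ∈ Finset.Ico 0 (μ i),
      ∑ ℓ : Fin n, C (e ℓ) * reducedNumerator (lam i) (μ i) (Mt i k) ℓ s = 0) :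
    IsTelescoper K (opOfFin fun ℓ => (σxK K ^ (ℓ : ℤ)) u * e ℓ)
      (∑ i, ∑ k : Fin (d i),
        applyB K (α i) (β i) (M i k) ((peF K (lam i) (μ i) (p i) ^ ((k : ℕ) + 1))⁻¹)) := by
  refine ⟨opOfFin_ne_zero fun h => he (funext fun ℓ => ?_), ?_⟩
  · exact (mul_eq_zero.mp (congrFun h ℓ)).resolve_left
      ((map_ne_zero_iff _ (RingEquiv.injective _)).mpr hu)
  have hzero : ∑ ℓ : Fin n, ∑ i, ∑ k : Fin (d i), ιx₀ K (e ℓ) * ∑ s ∈ Finset.Ico 0 (μ i),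
      ι₀ K (reducedNumerator (lam i) (μ i) (Mt i k) ℓ s) *
        (peShift (lam i) (μ i) (p i) s ^ ((k : ℕ) + 1))⁻¹ = 0 := by
    rw [Finset.sum_comm]
    refine Finset.sum_eq_zero fun i _ => ?_
    rw [Finset.sum_comm]
    refine Finset.sum_eq_zero fun k _ => ?_
    rw [sum_ιx₀_mul_sum_eq]
    exact Finset.sum_eq_zero fun s hs => by rw [hN i k s hs, map_zero, zero_mul]
  have hL : applyA K (ιxOp K (opOfFin fun ℓ => (σxK K ^ (ℓ : ℤ)) u * e ℓ))
      (∑ i, ∑ k : Fin (d i),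
        applyB K (α i) (β i) (M i k) ((peF K (lam i) (μ i) (p i) ^ ((k : ℕ) + 1))⁻¹)) =
      ∑ ℓ : Fin n, ∑ i, ∑ k : Fin (d i), ιx₀ K (e ℓ) * (ιx₀ K ((σxK K ^ (ℓ : ℤ)) u) *
        (σxF K ^ (ℓ : ℤ)) (applyB K (α i) (β i) (M i k)
          ((peF K (lam i) (μ i) (p i) ^ ((k : ℕ) + 1))⁻¹))) := by
    rw [applyA_ιxOp_opOfFin]
    simp only [map_sum, Finset.mul_sum, map_mul, mul_left_comm (ιx₀ K (e _)), mul_assoc]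
  change _ ∈ summableY
  rw [hL, ← sub_zero (∑ ℓ : Fin n, _), ← hzero]
  simp only [← Finset.sum_sub_distrib, ← mul_sub]
  exact sum_mem fun ℓ _ => sum_mem fun i _ => sum_mem fun k _ => ιx₀_mul_mem_summableY _
    (shift_applyB_sub_sum_reducedNumerator_mem_summableY (hμ i) (hbez i) (p i) _ hu (hMt i k) ℓ)

end Operators

section LinearAlgebra

variable {K : Type*} [Field K]

theorem exists_ne_zero_forall_coeff_sum_C_mul_eq_zero {ι : Type*} [Fintype ι] {n D : ℕ}
    (P : ι → Fin n → Rxy K) (a b : ι → ℕ) (h : Fintype.card ι < n * (D + 1)) :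
    ∃ e : Fin n → K[X], e ≠ 0 ∧ (∀ ℓ, (e ℓ).natDegree ≤ D) ∧
      ∀ j, ((∑ ℓ, C (e ℓ) * P j ℓ).coeff (b j)).coeff (a j) = 0 := by
  let F : (Fin n → degreeLT K (D + 1)) →ₗ[K] ι → K :=
    { toFun := fun v j => ((∑ ℓ, C (v ℓ : K[X]) * P j ℓ).coeff (b j)).coeff (a j)
      map_add' := fun v w => by ext j; simp [add_mul, Finset.sum_add_distrib]
      map_smul' := fun c v => by ext j; simp [Finset.mul_sum, smul_eq_C_mul, mul_assoc] }
  have : FiniteDimensional K (degreeLT K (D + 1)) :=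
    (degreeLT.basis K (D + 1)).finiteDimensional_of_finite
  have hdim : Module.finrank K (ι → K) < Module.finrank K (Fin n → degreeLT K (D + 1)) := by
    rw [Module.finrank_pi, Module.finrank_pi_fintype,
      Module.finrank_eq_card_basis (degreeLT.basis K (D + 1))]
    simpa using h
  obtain ⟨v, hv, hv0⟩ :=
    (Submodule.ne_bot_iff _).mp (LinearMap.ker_ne_bot_of_finrank_lt (f := F) hdim)
  refine ⟨fun ℓ => v ℓ, fun he => hv0 (funext fun ℓ => Subtype.ext (congrFun he ℓ)), fun ℓ => ?_,
    fun j => congrFun hv j⟩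
  rw [natDegree_le_iff_degree_le]
  exact Order.le_of_lt_succ (mem_degreeLT.mp (v ℓ).2)

end LinearAlgebra

section Counting

theorem cast_sum_range_add_sub (D A B : ℕ) (hBA : B ≤ A) :
    ((∑ b ∈ Finset.range B, (D + A - b) : ℕ) : ℚ) = B * (D + 1) + B * ((A - 1) - (B - 1) / 2) := by
  have hgauss := Finset.sum_range_id_mul_two B
  rw [Nat.cast_sum, Finset.sum_congr rfl fun b hb => Nat.cast_sub (by simp at hb; omega),
    Finset.sum_sub_distrib, Finset.sum_const, Finset.card_range, ← Nat.cast_sum]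
  rcases Nat.eq_zero_or_pos B with rfl | hB
  · simp
  have : ((∑ i ∈ Finset.range B, i : ℕ) : ℚ) * 2 = B * (B - 1) := by
    rw [← Nat.cast_ofNat, ← Nat.cast_mul, hgauss, Nat.cast_mul, Nat.cast_sub hB]; simp
  rw [nsmul_eq_mul, Nat.cast_add]
  linarith

/-- For each block `j` and residue `0 ≤ s < μ j`, the exponents `(b, a)` of the monomials
`x^a y^b` allowed in a polynomial with `DegLT · (D + A j) (B j)`. -/
abbrev CoeffIndex {ι : Type*} (μ : ι → ℤ) (A B : ι → ℕ) (D : ℕ) : Type _ :=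
  (j : ι) × Finset.Ico (0 : ℤ) (μ j) × (b : Fin (B j)) × Fin (D + A j - b)

theorem card_coeffIndex {ι : Type*} [Fintype ι] (μ : ι → ℤ) (A B : ι → ℕ) (D : ℕ) :
    Fintype.card (CoeffIndex μ A B D) =
      ∑ j, (μ j).toNat * ∑ b ∈ Finset.range (B j), (D + A j - b) := by
  simp only [Fintype.card_sigma, Fintype.card_prod, Fintype.card_coe, Int.card_Ico, sub_zero,
    Fintype.card_fin]
  congr! 2 with j
  exact Fin.sum_univ_eq_sum_range (fun b => D + A j - b) _

variable {ι : Type*} [Fintype ι] (μ α β : ι → ℤ)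

theorem cast_card_coeffIndex (hμ : ∀ j, 0 ≤ μ j) (hβ : ∀ j, -1 ≤ β j) (hβα : ∀ j, β j ≤ α j)
    (D : ℕ) :
    (Fintype.card (CoeffIndex μ (fun j => (α j + 1).toNat) (fun j => (β j + 1).toNat) D) : ℚ) =
      (D + 1) * ∑ j, (μ j : ℚ) * (β j + 1) + ∑ j, (μ j : ℚ) * (α j - β j / 2) * (β j + 1) := by
  have hcast : ∀ z : ℤ, 0 ≤ z → ((z.toNat : ℕ) : ℚ) = z := fun z hz => by
    exact_mod_cast Int.toNat_of_nonneg hz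
  rw [card_coeffIndex, Finset.mul_sum, ← Finset.sum_add_distrib, Nat.cast_sum]
  refine Finset.sum_congr rfl fun j _ => ?_
  rw [Nat.cast_mul, cast_sum_range_add_sub _ _ _ (by have := hβα j; omega), hcast _ (hμ j),
    hcast _ (by linarith [hβ j]), hcast _ (by linarith [hβ j, hβα j])]
  push_cast
  ring

theorem sum_mul_sub_half_mul_nonneg (hμ : ∀ j, 0 ≤ μ j) (hβ : ∀ j, -1 ≤ β j)
    (hβα : ∀ j, β j ≤ α j) : 0 ≤ ∑ j, (μ j : ℚ) * (α j - β j / 2) * (β j + 1) := by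
  refine Finset.sum_nonneg fun j _ => ?_
  obtain h | h : β j = -1 ∨ 0 ≤ β j := by have := hβ j; omega
  · simp [h]
  · have hα : (β j : ℚ) ≤ α j := by exact_mod_cast hβα j
    have hβ0 : (0 : ℚ) ≤ β j := by exact_mod_cast h
    have hμ0 : (0 : ℚ) ≤ μ j := by exact_mod_cast hμ j
    exact mul_nonneg (mul_nonneg hμ0 (by linarith)) (by linarith)

theorem le_and_card_coeffIndex_lt (hμ : ∀ j, 0 ≤ μ j) (hβ : ∀ j, -1 ≤ β j)
    (hβα : ∀ j, β j ≤ α j) {ρ0 : ℤ} (hρ0 : ρ0 = ∑ j, μ j * (β j + 1)) {ρ τ d : ℕ}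
    (hρ : ρ0 ≤ ρ)
    (hτ : (τ : ℚ) > d - 1 + (∑ j, (μ j : ℚ) * (α j - β j / 2) * (β j + 1)) / (ρ + 1 - ρ0)) :
    d ≤ τ ∧ Fintype.card (CoeffIndex μ (fun j => (α j + 1).toNat) (fun j => (β j + 1).toNat)
      (τ - d)) < (ρ + 1) * (τ - d + 1) := by
  set Q := ∑ j, (μ j : ℚ) * (α j - β j / 2) * (β j + 1)
  have hE : (0 : ℚ) < ρ + 1 - ρ0 := by
    have : (ρ0 : ℚ) ≤ ρ := by exact_mod_cast hρ
    linarith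
  have hQE : 0 ≤ Q / (ρ + 1 - ρ0) := div_nonneg (sum_mul_sub_half_mul_nonneg μ α β hμ hβ hβα) hE.le
  have hd : d ≤ τ := by
    have : (d : ℚ) < τ + 1 := by linarith
    exact_mod_cast Nat.lt_succ_iff.mp (by exact_mod_cast this)
  refine ⟨hd, ?_⟩
  have hkey : Q < (ρ + 1 - ρ0) * ((τ - d : ℕ) + 1) := by
    rw [← div_lt_iff₀' hE, Nat.cast_sub hd]
    linarith
  have hρ0' : (ρ0 : ℚ) = ∑ j, (μ j : ℚ) * (β j + 1) := by rw [hρ0]; push_cast; rfl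
  have hcard := cast_card_coeffIndex μ α β hμ hβ hβα (τ - d)
  rw [← hρ0'] at hcard
  suffices (Fintype.card (CoeffIndex μ (fun j => (α j + 1).toNat) (fun j => (β j + 1).toNat)
      (τ - d)) : ℚ) < ((ρ + 1) * (τ - d + 1) : ℕ) by exact_mod_cast this
  rw [hcard, Nat.cast_mul]
  push_cast
  linarith

end Counting

open scoped Classical

theorem statement14_general (K : Type*) [Field K]
    (m : ℕ) (d : Fin m → ℕ)
    (lam μ α β : Fin m → ℤ)
    (hμ : ∀ i, 0 < μ i)
    (hbez : ∀ i, α i * lam i + β i * μ i = 1)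
    (p : Fin m → Polynomial K)
    (M : (i : Fin m) → Fin (d i) → OpB K)
    (r : Fxy K)
    (hr : r = ∑ i : Fin m, ∑ k : Fin (d i),
        applyB K (α i) (β i) (M i k) ((peF K (lam i) (μ i) (p i) ^ ((k : ℕ) + 1))⁻¹))
    -- the common denominator `u` and the numerator operators `M̃_{ik}`:
    (u : Polynomial K) (hu : u ≠ 0)
    (Mt : (i : Fin m) → Fin (d i) → OpR K)
    (hMt : ∀ i k, ∀ l : ℤ, M i k l = ι₀ K (Mt i k l) / ιx₀ K u)
    -- `α_{ik} = max{−1, deg_{x,y}(M̃_{ik})}` and `β_{ik} = max{−1, deg_y(M̃_{ik})}`: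
    (αik βik : (i : Fin m) → Fin (d i) → ℤ)
    (hαik : ∀ i k, αik i k = if Mt i k = 0 then -1 else (degXYOp K (Mt i k) : ℤ))
    (hβik : ∀ i k, βik i k = if Mt i k = 0 then -1 else (degYOp K (Mt i k) : ℤ))
    -- `ρ_0 = Σ_i Σ_k μ_i (β_{ik} + 1)`:
    (ρ0 : ℤ) (hρ0 : ρ0 = ∑ i : Fin m, ∑ k : Fin (d i), μ i * (βik i k + 1))
    (ρ τ : ℕ) (hρ : ρ0 ≤ (ρ : ℤ))
    (hτ : (τ : ℚ) >
        (u.natDegree : ℚ) - 1 +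
          (∑ i : Fin m, ∑ k : Fin (d i),
              (μ i : ℚ) * ((αik i k : ℚ) - (βik i k : ℚ) / 2) * ((βik i k : ℚ) + 1)) /
            ((ρ : ℚ) + 1 - (ρ0 : ℚ))) :
    ∃ L : ℕ →₀ Polynomial K,
      IsTelescoper K L r ∧
        (∀ ℓ ∈ L.support, ℓ ≤ ρ) ∧
        (∀ ℓ, (L ℓ).natDegree ≤ τ) := by
  have hbounds i k := degLT_of_eq_ite (hαik i k) (hβik i k)
  obtain ⟨hτu, hcard⟩ := le_and_card_coeffIndex_lt (fun j : (i : Fin m) × Fin (d i) => μ j.1)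
    (fun j => αik j.1 j.2) (fun j => βik j.1 j.2) (fun j => (hμ j.1).le) (fun j => (hbounds _ _).1)
    (fun j => (hbounds _ _).2.1) (by simpa [Fintype.sum_sigma] using hρ0) hρ
    (by simpa [Fintype.sum_sigma] using hτ)
  obtain ⟨e, he, hedeg, hcoeff⟩ := exists_ne_zero_forall_coeff_sum_C_mul_eq_zero (h := hcard)
    (fun (c : CoeffIndex (fun j : (i : Fin m) × Fin (d i) => μ j.1) _ _ _) ℓ =>
      reducedNumerator (lam c.1.1) (μ c.1.1) (Mt c.1.1 c.1.2) ℓ c.2.1)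
    (fun c => c.2.2.2) (fun c => c.2.2.1)
  have hN : ∀ i k, ∀ s ∈ Finset.Ico 0 (μ i),
      ∑ ℓ : Fin (ρ + 1), C (e ℓ) * reducedNumerator (lam i) (μ i) (Mt i k) ℓ s = 0 :=
    fun i k s hs => DegLT.eq_zero (DegLT.sum _ fun ℓ _ =>
      ((DegLT.reducedNumerator (hbounds i k).2.2 _ _ ℓ s).C_mul (hedeg ℓ)))
      fun b hb a ha => hcoeff ⟨⟨i, k⟩, ⟨s, hs⟩, ⟨b, hb⟩, ⟨a, ha⟩⟩
  refine ⟨_, hr ▸ isTelescoper_opOfFin hμ hbez hu hMt he hN,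
    fun ℓ hℓ => Nat.lt_succ_iff.mp (lt_of_mem_support_opOfFin hℓ),
    natDegree_opOfFin_le fun ℓ => natDegree_mul_le.trans ?_⟩
  rw [σxK_zpow_apply, natDegree_taylor]
  have := hedeg ℓ
  omega

/-- Lemma `LEM:octorderdegree`: order-degree curve for the new
algorithm.  Let `r = Σ_i Σ_k M_{ik}(1/p_i(λ_i x + μ_i y)^k)` as in the context, let
`u` be the common denominator of the `M_{ik}`, `M_{ik} = (1/u) M̃_{ik}`,
`α_{ik} = max{−1, deg_{x,y}(M̃_{ik})}`, `β_{ik} = max{−1, deg_y(M̃_{ik})}` and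
`ρ_0 = Σ_i Σ_k μ_i(β_{ik}+1)`.  Then for every pair `(ρ,τ)` of nonnegative integers
with `ρ ≥ ρ_0` and
`τ > deg_x(u) − 1 + (Σ_i Σ_k μ_i(α_{ik} − β_{ik}/2)(β_{ik}+1))/(ρ + 1 − ρ_0)`,
there exists a telescoper for `r` of order at most `ρ` and degree at most `τ`. -/
theorem statement14 (K : Type*) [Field K] [CharZero K]
    (m : ℕ) (d : Fin m → ℕ) (hd : ∀ i, 0 < d i)
    (lam μ α β : Fin m → ℤ)
    (hμ : ∀ i, 0 < μ i) (hcop : ∀ i, IsCoprime (lam i) (μ i))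
    (hbez : ∀ i, α i * lam i + β i * μ i = 1)
    (hα : ∀ i, 0 ≤ α i ∧ α i < μ i)
    (hβ : ∀ i, lam i ≠ 0 → |β i| ≤ |lam i|)
    (hβ0 : ∀ i, lam i = 0 → α i = 0 ∧ β i = 1)
    (p : Fin m → Polynomial K) (hp : ∀ i, (p i).Monic) (hpirr : ∀ i, Irreducible (p i))
    (M : (i : Fin m) → Fin (d i) → OpB K)
    (hMcoeff : ∀ i k, ∀ l : ℤ, ∃ (aa : Rxy K) (uu : Polynomial K), uu ≠ 0 ∧
        M i k l = ι₀ K aa / ιx₀ K uu ∧ aa.degree < (p i).degree)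
    (hMpoly : ∀ i k, ∀ l : ℤ, l < 0 → M i k l = 0)
    (hineq : ∀ i j : Fin m, i ≠ j → ∀ s t : ℤ,
        peR K (lam i) (μ i) (p i) ≠ (σxR K ^ s * σyR K ^ t) (peR K (lam j) (μ j) (p j)))
    (r : Fxy K)
    (hr : r = ∑ i : Fin m, ∑ k : Fin (d i),
        applyB K (α i) (β i) (M i k) ((peF K (lam i) (μ i) (p i) ^ ((k : ℕ) + 1))⁻¹))
    -- the common denominator `u` and the numerator operators `M̃_{ik}`:
    (u : Polynomial K) (hu : u ≠ 0)
    (Mt : (i : Fin m) → Fin (d i) → OpR K)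
    (hMt : ∀ i k, ∀ l : ℤ, M i k l = ι₀ K (Mt i k l) / ιx₀ K u)
    -- `α_{ik} = max{−1, deg_{x,y}(M̃_{ik})}` and `β_{ik} = max{−1, deg_y(M̃_{ik})}`:
    (αik βik : (i : Fin m) → Fin (d i) → ℤ)
    (hαik : ∀ i k, αik i k = if Mt i k = 0 then -1 else (degXYOp K (Mt i k) : ℤ))
    (hβik : ∀ i k, βik i k = if Mt i k = 0 then -1 else (degYOp K (Mt i k) : ℤ))
    -- `ρ_0 = Σ_i Σ_k μ_i (β_{ik} + 1)`:
    (ρ0 : ℤ) (hρ0 : ρ0 = ∑ i : Fin m, ∑ k : Fin (d i), μ i * (βik i k + 1))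
    (ρ τ : ℕ) (hρ : ρ0 ≤ (ρ : ℤ))
    (hτ : (τ : ℚ) >
        (u.natDegree : ℚ) - 1 +
          (∑ i : Fin m, ∑ k : Fin (d i),
              (μ i : ℚ) * ((αik i k : ℚ) - (βik i k : ℚ) / 2) * ((βik i k : ℚ) + 1)) /
            ((ρ : ℚ) + 1 - (ρ0 : ℚ))) :
    ∃ L : ℕ →₀ Polynomial K,
      IsTelescoper K L r ∧
        (∀ ℓ ∈ L.support, ℓ ≤ ρ) ∧
        (∀ ℓ, (L ℓ).natDegree ≤ τ) :=
  statement14_general K m d lam μ α β hμ hbez p M r hr u hu Mt hMt αik βik hαik hβik ρ0 hρ0 ρ τ hρ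
    hτ
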